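/- Let 2 < θ < 3. The dispersion relation ω(k) := √(α̂(k)) is differentiable at every k ∈ (0, 1/2), with ω'(k) = α̂'(k)/(2√(α̂(k))) where α̂'(k) = 4π·Σ_{x=1}^∞ sin(2πkx)/x^{θ−1}, and lim_{k→0+} k^{(3−θ)/2}·ω'(k) = (θ−1)·√(C(θ))/2, where C(θ) := 4π^{θ−1}·∫₀^∞ sin²(y)/y^θ dy. In particular the derivative of the dispersion relation diverges like |k|^{−(3−θ)/2} as k → 0. -/

import Mathlib

noncomputable section
open Real

/-- `α̂(k) = 4 Σ_{x≥1} sin²(πkx)/x^θ`, the Fourier transform of the long-range coupling. -/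
def ahat (θ k : ℝ) : ℝ := 4 * ∑' x : ℕ, sin (π * k * ((x : ℝ) + 1)) ^ 2 / ((x : ℝ) + 1) ^ θ

/-- The dispersion relation `ω(k) = √(α̂(k))`. -/
def disp (θ k : ℝ) : ℝ := Real.sqrt (ahat θ k)

/-- `α̂'(k) = 4π Σ_{x≥1} sin(2πkx)/x^{θ-1}`. -/
def ahatD (θ k : ℝ) : ℝ := 4 * π * ∑' x : ℕ, sin (2 * π * k * ((x : ℝ) + 1)) / ((x : ℝ) + 1) ^ (θ - 1)

/-- `C(θ) = 4 π^{θ-1} ∫₀^∞ sin²(y)/y^θ dy` for `2 < θ < 3`. -/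
def Cθ (θ : ℝ) : ℝ := 4 * π ^ (θ - 1) * ∫ y in Set.Ioi (0 : ℝ), sin y ^ 2 / y ^ θ

/-!
Differentiating term by term gives `α̂' = ahatD`, and `α̂ > 0` on `(0, 1/2)`, so
`ω' = α̂' / (2 √α̂)` there. For small `k`, `k^{1-θ} α̂(k)` and `k^{2-θ} α̂'(k)` are Riemann sums
with mesh `k` of `4 ∫₀^∞ sin²(πy) y^{-θ} dy` and `4π ∫₀^∞ sin(2πy) y^{1-θ} dy`. If
`|g| ≤ M y^a` and `|g'| ≤ M y^{a-1}` with `a = 2 - θ ∈ (-1, 0)`, the mean value theorem on each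
cell `(kn, k(n+1)]` and a direct estimate on the first cell bound the Riemann-sum error by
`O(k^{a+1})`. An integration by parts shows that the second integral is `θ - 1` times the first,
and the substitution `y ↦ πy` identifies the first with `C(θ)`. Hence
`k^{(3-θ)/2} ω'(k) = k^{2-θ} α̂'(k) / (2 √(k^{1-θ} α̂(k))) → (θ - 1) C(θ) / (2 √C(θ))`.
-/

open MeasureTheory Filter Set Topology

lemma summable_nat_add_one_rpow {p : ℝ} (hp : p < -1) :
    Summable (fun n : ℕ => ((n : ℝ) + 1) ^ p) := by
  simpa using (summable_nat_add_iff 1).mpr (Real.summable_nat_rpow.mpr hp)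

lemma abs_mul_sub_integral_Ioc_le {g : ℝ → ℝ} {c k B : ℝ} (hk : 0 ≤ k)
    (hdiff : ∀ z ∈ Icc c (c + k), DifferentiableAt ℝ g z)
    (hB : ∀ z ∈ Icc c (c + k), |deriv g z| ≤ B) :
    |k * g c - ∫ y in Ioc c (c + k), g y| ≤ B * k ^ 2 := by
  have hck : c ≤ c + k := by linarith
  have hB0 : 0 ≤ B := (abs_nonneg _).trans (hB c (left_mem_Icc.mpr hck))
  have hint : IntervalIntegrable g volume c (c + k) :=
    (ContinuousOn.intervalIntegrable_of_Icc hck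
      fun z hz => (hdiff z hz).continuousAt.continuousWithinAt)
  have hmvt : ∀ y ∈ uIoc c (c + k), ‖g c - g y‖ ≤ B * k := by
    intro y hy
    rw [uIoc_of_le hck] at hy
    rw [norm_sub_rev]
    calc ‖g y - g c‖ ≤ B * (y - c) :=
          norm_image_sub_le_of_norm_deriv_le_segment'
            (fun z hz => (hdiff z hz).hasDerivAt.hasDerivWithinAt)
            (fun z hz => hB z (Ico_subset_Icc_self hz)) y (Ioc_subset_Icc_self hy)
      _ ≤ B * k := mul_le_mul_of_nonneg_left (by linarith [hy.2]) hB0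
  have hdiffint : k * g c - ∫ y in Ioc c (c + k), g y = ∫ y in c..c + k, (g c - g y) := by
    rw [intervalIntegral.integral_sub intervalIntegrable_const hint,
      intervalIntegral.integral_const, intervalIntegral.integral_of_le hck, smul_eq_mul]
    ring
  calc |k * g c - ∫ y in Ioc c (c + k), g y| ≤ B * k * |c + k - c| := by
        rw [hdiffint]; exact intervalIntegral.norm_integral_le_of_norm_le_const hmvt
    _ = B * k ^ 2 := by rw [add_sub_cancel_left, abs_of_nonneg hk]; ring

lemma hasSum_integral_Ioc_mul_nat {g : ℝ → ℝ} {k : ℝ} (hk : 0 < k) (hg : IntegrableOn g (Ioi 0)) :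
    HasSum (fun n : ℕ => ∫ y in Ioc (k * n) (k * (n + 1)), g y) (∫ y in Ioi 0, g y) := by
  have hmono : Monotone fun n : ℕ => k * n :=
    fun m n hmn => mul_le_mul_of_nonneg_left (by exact_mod_cast hmn) hk.le
  have hunion : ⋃ n : ℕ, Ioc (k * n) (k * (n + 1)) = Ioi 0 := by
    have hunb : ¬BddAbove (range fun n : ℕ => k * n) := by
      rintro ⟨b, hb⟩
      obtain ⟨n, hn⟩ := exists_nat_gt (b / k)
      have := hb ⟨n, rfl⟩
      rw [div_lt_iff₀ hk] at hn
      linarith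
    simpa using iUnion_Ioc_map_succ_eq_Ioi (fun n => hmono (Nat.zero_le n)) hunb
  have hdisj : Pairwise (Function.onFun Disjoint fun n : ℕ => Ioc (k * n) (k * (n + 1))) := by
    simpa using hmono.pairwise_disjoint_on_Ioc_succ
  simpa [hunion] using
    hasSum_integral_iUnion (fun _ => measurableSet_Ioc) hdisj (hunion ▸ hg)

lemma abs_mul_sub_integral_Ioc_le_of_deriv_rpow {g : ℝ → ℝ} {a M k c : ℝ} (ha : a ≤ 1) (hk : 0 ≤ k)
    (hc : 0 < c) (hg_diff : ∀ y > 0, DifferentiableAt ℝ g y)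
    (hg' : ∀ y > 0, |deriv g y| ≤ M * y ^ (a - 1)) :
    |k * g c - ∫ y in Ioc c (c + k), g y| ≤ M * c ^ (a - 1) * k ^ 2 := by
  have hM : 0 ≤ M := nonneg_of_mul_nonneg_left ((abs_nonneg _).trans (hg' c hc))
    (rpow_pos_of_pos hc _)
  refine abs_mul_sub_integral_Ioc_le hk (fun z hz => hg_diff z (hc.trans_le hz.1)) fun z hz => ?_
  exact (hg' z (hc.trans_le hz.1)).trans <| mul_le_mul_of_nonneg_left
    (rpow_le_rpow_of_nonpos hc hz.1 (by linarith)) hM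

lemma abs_integral_Ioc_zero_le {g : ℝ → ℝ} {a M k : ℝ} (ha : -1 < a) (hk : 0 ≤ k)
    (hg_int : IntegrableOn g (Ioc 0 k)) (hg : ∀ y ∈ Ioc 0 k, |g y| ≤ M * y ^ a) :
    |∫ y in Ioc 0 k, g y| ≤ M / (a + 1) * k ^ (a + 1) := by
  rw [← intervalIntegral.integral_of_le hk]
  calc |∫ y in (0)..k, g y| ≤ ∫ y in (0)..k, M * y ^ a :=
        intervalIntegral.abs_integral_le_integral_abs hk |>.trans <|
          intervalIntegral.integral_mono_on_of_le_Ioo hk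
            ((intervalIntegrable_iff_integrableOn_Ioc_of_le hk).mpr hg_int).abs
            ((intervalIntegral.intervalIntegrable_rpow' ha).const_mul M)
            fun y hy => hg y (Ioo_subset_Ioc_self hy)
    _ = M / (a + 1) * k ^ (a + 1) := by
        rw [intervalIntegral.integral_const_mul, integral_rpow (Or.inl ha),
          zero_rpow (by linarith)]
        ring

lemma abs_mul_tsum_sub_integral_le {g : ℝ → ℝ} {a M k : ℝ} (ha : a ∈ Ioo (-1) 0) (hk : 0 < k)
    (hg_int : IntegrableOn g (Ioi 0)) (hg_diff : ∀ y > 0, DifferentiableAt ℝ g y)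
    (hg : ∀ y > 0, |g y| ≤ M * y ^ a) (hg' : ∀ y > 0, |deriv g y| ≤ M * y ^ (a - 1)) :
    |k * ∑' n : ℕ, g (k * (n + 1)) - ∫ y in Ioi 0, g y|
      ≤ (M * ∑' n : ℕ, ((n : ℝ) + 1) ^ (a - 1) + M / (a + 1)) * k ^ (a + 1) := by
  set I : ℕ → ℝ := fun n => ∫ y in Ioc (k * n) (k * (n + 1)), g y
  set d : ℕ → ℝ := fun n => k * g (k * (n + 1)) - I (n + 1)
  have hZ := summable_nat_add_one_rpow (p := a - 1) (by linarith [ha.2])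
  have hd : ∀ n : ℕ, ‖d n‖ ≤ M * k ^ (a + 1) * ((n : ℝ) + 1) ^ (a - 1) := by
    intro n
    have hcell : I (n + 1) = ∫ y in Ioc (k * (n + 1)) (k * (n + 1) + k), g y := by
      simp only [I]; push_cast; ring_nf
    calc ‖d n‖ ≤ M * (k * (n + 1)) ^ (a - 1) * k ^ 2 := by
          simpa only [d, hcell, Real.norm_eq_abs] using abs_mul_sub_integral_Ioc_le_of_deriv_rpow
            (by linarith [ha.2]) hk.le (by positivity) hg_diff hg'
      _ = M * k ^ (a + 1) * ((n : ℝ) + 1) ^ (a - 1) := by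
          rw [mul_rpow hk.le (by positivity), show a + 1 = (a - 1) + 2 by ring,
            rpow_add hk, rpow_two]
          ring
  have hI0 : |I 0| ≤ M / (a + 1) * k ^ (a + 1) := by
    simpa [I] using abs_integral_Ioc_zero_le ha.1 hk.le (hg_int.mono_set Ioc_subset_Ioi_self)
      fun y hy => hg y hy.1
  have hsum : HasSum (fun n : ℕ => k * g (k * (n + 1)))
      ((∫ y in Ioi 0, g y) - I 0 + ∑' n, d n) := by
    have htail : HasSum (fun n => I (n + 1)) ((∫ y in Ioi 0, g y) - I 0) := by
      simpa [I] using (hasSum_nat_add_iff' 1).mpr (hasSum_integral_Ioc_mul_nat hk hg_int)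
    convert htail.add (Summable.of_norm_bounded (hZ.mul_left _) hd).hasSum using 1
    ext n
    simp only [d]
    ring
  rw [← tsum_mul_left, hsum.tsum_eq]
  calc |(∫ y in Ioi 0, g y) - I 0 + ∑' n, d n - ∫ y in Ioi 0, g y|
      ≤ ‖∑' n, d n‖ + |I 0| := by
        rw [Real.norm_eq_abs, show ∀ x y z : ℝ, x - y + z - x = z - y by intros; ring]
        exact abs_sub _ _
    _ ≤ M * k ^ (a + 1) * ∑' n : ℕ, ((n : ℝ) + 1) ^ (a - 1) + M / (a + 1) * k ^ (a + 1) :=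
        add_le_add (tsum_of_norm_bounded (hZ.hasSum.mul_left _) hd) hI0
    _ = _ := by ring

lemma tendsto_const_mul_rpow_nhdsGT_zero {s : ℝ} (hs : 0 < s) (C : ℝ) :
    Tendsto (fun x : ℝ => C * x ^ s) (𝓝[>] 0) (𝓝 0) := by
  simpa [zero_rpow hs.ne'] using
    ((continuousAt_rpow_const 0 s (Or.inr hs.le)).tendsto.mono_left nhdsWithin_le_nhds).const_mul C

lemma tendsto_mul_tsum_integral_Ioi {g : ℝ → ℝ} {a M : ℝ} (ha : a ∈ Ioo (-1) 0)
    (hg_int : IntegrableOn g (Ioi 0)) (hg_diff : ∀ y > 0, DifferentiableAt ℝ g y)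
    (hg : ∀ y > 0, |g y| ≤ M * y ^ a) (hg' : ∀ y > 0, |deriv g y| ≤ M * y ^ (a - 1)) :
    Tendsto (fun k => k * ∑' n : ℕ, g (k * (n + 1))) (𝓝[>] 0) (𝓝 (∫ y in Ioi 0, g y)) := by
  rw [tendsto_iff_norm_sub_tendsto_zero]
  refine squeeze_zero' (Eventually.of_forall fun _ => norm_nonneg _) ?_
    (tendsto_const_mul_rpow_nhdsGT_zero (s := a + 1) (by linarith [ha.1])
      (M * ∑' n : ℕ, ((n : ℝ) + 1) ^ (a - 1) + M / (a + 1)))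
  filter_upwards [self_mem_nhdsWithin] with k hk
  exact abs_mul_tsum_sub_integral_le ha hk hg_int hg_diff hg hg'

section MulRpowNeg

variable {h : ℝ → ℝ} {B j p : ℝ}

lemma abs_mul_rpow_neg_le {y : ℝ} (hy : 0 < y) (hh : |h y| ≤ B * y ^ j) :
    |h y * y ^ (-p)| ≤ B * y ^ (j - p) := by
  rw [abs_mul, abs_of_pos (rpow_pos_of_pos hy _), sub_eq_add_neg, rpow_add hy, ← mul_assoc]
  exact mul_le_mul_of_nonneg_right hh (rpow_pos_of_pos hy _).le

lemma abs_deriv_mul_rpow_neg_le {y : ℝ} (hp : 0 ≤ p) (hy : 0 < y)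
    (hdiff : DifferentiableAt ℝ h y) (hh : |h y| ≤ B * y ^ j)
    (hh' : |deriv h y| ≤ B * y ^ (j - 1)) :
    |deriv (fun y => h y * y ^ (-p)) y| ≤ (1 + p) * B * y ^ (j - p - 1) := by
  have hder : HasDerivAt (fun y => h y * y ^ (-p))
      (deriv h y * y ^ (-p) + h y * (-p * y ^ (-p - 1))) y :=
    hdiff.hasDerivAt.mul (hasDerivAt_rpow_const (Or.inl hy.ne'))
  rw [hder.deriv]
  have hy1 : y ^ (j - p - 1) = y ^ (j - 1) * y ^ (-p) := by rw [← rpow_add hy]; ring_nf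
  have hy2 : y ^ (j - p - 1) = y ^ j * y ^ (-p - 1) := by rw [← rpow_add hy]; ring_nf
  have hpos := rpow_pos_of_pos hy (-p)
  have hpos' := rpow_pos_of_pos hy (-p - 1)
  calc |deriv h y * y ^ (-p) + h y * (-p * y ^ (-p - 1))|
      ≤ |deriv h y| * y ^ (-p) + p * (|h y| * y ^ (-p - 1)) := by
        refine (abs_add_le _ _).trans_eq ?_
        rw [abs_mul, abs_mul, abs_mul, abs_neg, abs_of_nonneg hp, abs_of_pos hpos,
          abs_of_pos hpos']
        ring
    _ ≤ B * y ^ (j - 1) * y ^ (-p) + p * (B * y ^ j * y ^ (-p - 1)) := by gcongr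
    _ = (1 + p) * B * y ^ (j - p - 1) := by linear_combination (-B) * hy1 + (-p * B) * hy2

lemma integrableOn_Ioi_mul_rpow_neg (hcont : Continuous h) (hp : 1 < p) (hjp : -1 < j - p)
    (hh : ∀ y > 0, |h y| ≤ B * y ^ j) (hbdd : ∀ y, |h y| ≤ B) :
    IntegrableOn (fun y => h y * y ^ (-p)) (Ioi 0) := by
  have hmeas : AEStronglyMeasurable (fun y => h y * y ^ (-p)) :=
    (hcont.measurable.mul (measurable_id.pow_const _)).aestronglyMeasurable
  have h01 : IntegrableOn (fun y => h y * y ^ (-p)) (Ioc 0 1) := by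
    refine Integrable.mono' (((intervalIntegral.intervalIntegrable_rpow' hjp).const_mul B
      ).1) hmeas.restrict ?_
    filter_upwards [ae_restrict_mem measurableSet_Ioc] with y hy
    exact abs_mul_rpow_neg_le hy.1 (hh y hy.1)
  have h1 : IntegrableOn (fun y => h y * y ^ (-p)) (Ioi 1) := by
    refine Integrable.mono'
      ((integrableOn_Ioi_rpow_of_lt (by linarith : -p < -1) one_pos).const_mul B) hmeas.restrict ?_
    filter_upwards [ae_restrict_mem measurableSet_Ioi] with y hy
    rw [Real.norm_eq_abs, abs_mul, abs_of_pos (rpow_pos_of_pos (one_pos.trans hy) _)]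
    exact mul_le_mul_of_nonneg_right (hbdd y) (rpow_pos_of_pos (one_pos.trans hy) _).le
  simpa [Ioc_union_Ioi_eq_Ioi zero_le_one] using h01.union h1

lemma tendsto_mul_tsum_mul_rpow_neg (hdiff : Differentiable ℝ h) (hp : 1 < p)
    (hjp : j - p ∈ Ioo (-1) 0) (hh : ∀ y > 0, |h y| ≤ B * y ^ j)
    (hh' : ∀ y > 0, |deriv h y| ≤ B * y ^ (j - 1)) (hbdd : ∀ y, |h y| ≤ B) :
    Tendsto (fun k => k * ∑' n : ℕ, h (k * (n + 1)) * (k * (n + 1)) ^ (-p)) (𝓝[>] 0)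
      (𝓝 (∫ y in Ioi 0, h y * y ^ (-p))) := by
  have hB : 0 ≤ B := (abs_nonneg _).trans (hbdd 0)
  refine tendsto_mul_tsum_integral_Ioi (M := (1 + p) * B) hjp
    (integrableOn_Ioi_mul_rpow_neg hdiff.continuous hp hjp.1 hh hbdd)
    (fun y hy => (hdiff y).mul (differentiableAt_rpow_const_of_ne _ hy.ne'))
    (fun y hy => (abs_mul_rpow_neg_le hy (hh y hy)).trans ?_)
    (fun y hy => abs_deriv_mul_rpow_neg_le (by linarith) hy (hdiff y) (hh y hy) (hh' y hy))
  exact mul_le_mul_of_nonneg_right (by nlinarith) (rpow_pos_of_pos hy _).le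

end MulRpowNeg

lemma hasDerivAt_ahat {θ : ℝ} (hθ : 2 < θ) (k : ℝ) : HasDerivAt (ahat θ) (ahatD θ k) k := by
  have hterm : ∀ (n : ℕ) (y : ℝ),
      HasDerivAt (fun y => sin (π * y * ((n : ℝ) + 1)) ^ 2 / ((n : ℝ) + 1) ^ θ)
        (π * (sin (2 * π * y * ((n : ℝ) + 1)) / ((n : ℝ) + 1) ^ (θ - 1))) y := by
    intro n y
    have hc : (0 : ℝ) < n + 1 := by positivity
    refine ((((hasDerivAt_id' y).const_mul π).mul_const ((n : ℝ) + 1)).sin.pow 2).div_const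
      (((n : ℝ) + 1) ^ θ) |>.congr_deriv ?_
    rw [show 2 * π * y * ((n : ℝ) + 1) = 2 * (π * y * ((n : ℝ) + 1)) by ring, sin_two_mul,
      rpow_sub hc, rpow_one]
    field_simp
    ring
  have hbound : ∀ (n : ℕ) (y : ℝ),
      ‖π * (sin (2 * π * y * ((n : ℝ) + 1)) / ((n : ℝ) + 1) ^ (θ - 1))‖
        ≤ π * ((n : ℝ) + 1) ^ (1 - θ) := by
    intro n y
    have hc : (0 : ℝ) < n + 1 := by positivity
    rw [norm_mul, norm_div, Real.norm_of_nonneg pi_pos.le,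
      Real.norm_of_nonneg (rpow_pos_of_pos hc _).le, show 1 - θ = -(θ - 1) by ring,
      rpow_neg hc.le, ← one_div]
    gcongr
    exact abs_sin_le_one _
  have := (hasDerivAt_tsum ((summable_nat_add_one_rpow (by linarith)).mul_left π) hterm hbound
    (y₀ := 0) (by simp) k).const_mul 4
  unfold ahat ahatD
  simpa only [tsum_mul_left, mul_assoc] using this

lemma ahat_pos {θ k : ℝ} (hθ : 1 < θ) (hk : k ∈ Ioo 0 1) : 0 < ahat θ k := by
  have hsummable : Summable fun n : ℕ => sin (π * k * ((n : ℝ) + 1)) ^ 2 / ((n : ℝ) + 1) ^ θ := by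
    refine (summable_nat_add_one_rpow (p := -θ) (by linarith)).of_nonneg_of_le
      (fun n => by positivity) fun n => ?_
    rw [rpow_neg (by positivity), ← one_div]
    gcongr
    exact sin_sq_le_one _
  have hsin : 0 < sin (π * k) :=
    sin_pos_of_pos_of_lt_pi (mul_pos pi_pos hk.1) (by nlinarith [pi_pos, hk.2])
  have := hsummable.tsum_pos (fun n => by positivity) 0 (by simpa using pow_pos hsin 2)
  unfold ahat
  positivity

lemma mul_tsum_mul_rpow_neg_eq {f : ℝ → ℝ} {k : ℝ} (hk : 0 < k) (p : ℝ) :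
    k * ∑' n : ℕ, f (k * (n + 1)) * (k * (n + 1)) ^ (-p) =
      k ^ (1 - p) * ∑' n : ℕ, f (k * (n + 1)) / ((n : ℝ) + 1) ^ p := by
  have hterm : ∀ n : ℕ, f (k * (n + 1)) * (k * (n + 1)) ^ (-p) =
      k ^ (-p) * (f (k * (n + 1)) / ((n : ℝ) + 1) ^ p) := by
    intro n
    rw [mul_rpow hk.le (by positivity), rpow_neg (by positivity : (0 : ℝ) ≤ n + 1)]
    ring
  rw [tsum_congr hterm, tsum_mul_left, ← mul_assoc, sub_eq_add_neg, rpow_add hk, rpow_one]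

lemma abs_sin_two_pi_mul_le {y : ℝ} (hy : 0 < y) : |sin (2 * π * y)| ≤ 2 * π * y ^ (1 : ℝ) := by
  simpa [rpow_one, abs_of_pos (by positivity : 0 < 2 * π * y)] using
    abs_sin_le_abs (x := 2 * π * y)

lemma abs_sin_two_pi_mul_le_const (y : ℝ) : |sin (2 * π * y)| ≤ 2 * π :=
  (abs_sin_le_one _).trans (by nlinarith [pi_gt_three])

lemma abs_deriv_sin_two_pi_mul_le (y : ℝ) :
    |deriv (fun y => sin (2 * π * y)) y| ≤ 2 * π * y ^ ((1 : ℝ) - 1) := by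
  rw [(((hasDerivAt_id' y).const_mul (2 * π)).sin).deriv, sub_self, rpow_zero, mul_one,
    abs_mul, abs_of_pos (by positivity : (0 : ℝ) < 2 * π)]
  exact mul_le_of_le_one_left (by positivity) (abs_cos_le_one _)

lemma integrableOn_sin_two_pi_mul_mul_rpow_neg {θ : ℝ} (hθ1 : 2 < θ) (hθ2 : θ < 3) :
    IntegrableOn (fun y => sin (2 * π * y) * y ^ (-(θ - 1))) (Ioi 0) :=
  integrableOn_Ioi_mul_rpow_neg (j := 1) (by fun_prop) (by linarith) (by linarith)
    (fun _ hy => abs_sin_two_pi_mul_le hy) abs_sin_two_pi_mul_le_const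

lemma abs_sin_pi_mul_sq_le (y : ℝ) : |sin (π * y) ^ 2| ≤ 2 * π ^ 2 * y ^ (2 : ℝ) := by
  rw [abs_of_nonneg (sq_nonneg _), rpow_two]
  nlinarith [sin_sq_le_sq (x := π * y), sq_nonneg (π * y)]

lemma abs_sin_pi_mul_sq_le_const (y : ℝ) : |sin (π * y) ^ 2| ≤ 2 * π ^ 2 := by
  rw [abs_of_nonneg (sq_nonneg _)]
  nlinarith [sin_sq_le_one (π * y), pi_gt_three]

lemma hasDerivAt_sin_pi_mul_sq (y : ℝ) :
    HasDerivAt (fun y => sin (π * y) ^ 2) (π * sin (2 * π * y)) y := by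
  refine (((hasDerivAt_id' y).const_mul π).sin.fun_pow 2).congr_deriv ?_
  rw [show 2 * π * y = 2 * (π * y) by ring, sin_two_mul]
  push_cast
  ring

lemma abs_deriv_sin_pi_mul_sq_le {y : ℝ} (hy : 0 < y) :
    |deriv (fun y => sin (π * y) ^ 2) y| ≤ 2 * π ^ 2 * y ^ ((2 : ℝ) - 1) := by
  rw [(hasDerivAt_sin_pi_mul_sq y).deriv, abs_mul, abs_of_pos pi_pos,
    show (2 : ℝ) - 1 = 1 by norm_num]
  nlinarith [abs_sin_two_pi_mul_le hy, pi_pos]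

lemma integrableOn_sin_pi_mul_sq_mul_rpow_neg {θ : ℝ} (hθ1 : 1 < θ) (hθ2 : θ < 3) :
    IntegrableOn (fun y => sin (π * y) ^ 2 * y ^ (-θ)) (Ioi 0) :=
  integrableOn_Ioi_mul_rpow_neg (j := 2) (by fun_prop) hθ1 (by linarith)
    (fun y _ => abs_sin_pi_mul_sq_le y) abs_sin_pi_mul_sq_le_const

lemma Cθ_eq (θ : ℝ) : Cθ θ = 4 * ∫ y in Ioi 0, sin (π * y) ^ 2 * y ^ (-θ) := by
  have hsubst := integral_comp_mul_left_Ioi (fun u => sin u ^ 2 / u ^ θ) 0 pi_pos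
  have hscale : ∫ y in Ioi 0, sin (π * y) ^ 2 / (π * y) ^ θ
      = π ^ (-θ) * ∫ y in Ioi 0, sin (π * y) ^ 2 * y ^ (-θ) := by
    rw [← integral_const_mul]
    refine setIntegral_congr_fun measurableSet_Ioi fun y hy => ?_
    rw [mul_rpow pi_pos.le (le_of_lt hy), rpow_neg pi_pos.le, rpow_neg (le_of_lt hy)]
    field_simp
  rw [mul_zero, hscale, smul_eq_mul, eq_inv_mul_iff_mul_eq₀ pi_ne_zero] at hsubst
  rw [Cθ, ← hsubst, rpow_sub_one pi_ne_zero, rpow_neg pi_pos.le]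
  field_simp

lemma Cθ_pos {θ : ℝ} (hθ1 : 1 < θ) (hθ2 : θ < 3) : 0 < Cθ θ := by
  have hpos : ∀ y ∈ Ioo (0 : ℝ) 1, 0 < sin (π * y) ^ 2 * y ^ (-θ) := fun y hy =>
    mul_pos (pow_pos (sin_pos_of_pos_of_lt_pi (mul_pos pi_pos hy.1)
      (by nlinarith [pi_pos, hy.2])) 2) (rpow_pos_of_pos hy.1 _)
  rw [Cθ_eq]
  refine mul_pos four_pos ?_
  rw [setIntegral_pos_iff_support_of_nonneg_ae ?nonneg
    (integrableOn_sin_pi_mul_sq_mul_rpow_neg hθ1 hθ2)]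
  · refine lt_of_lt_of_le ?_ (measure_mono fun y hy => ⟨(hpos y hy).ne', (hy.1 : y ∈ Ioi 0)⟩)
    simp
  case nonneg =>
    filter_upwards [ae_restrict_mem measurableSet_Ioi] with y hy
    exact mul_nonneg (sq_nonneg _) (rpow_pos_of_pos hy _).le

lemma integral_sin_two_pi_mul_mul_rpow_neg {θ : ℝ} (hθ1 : 2 < θ) (hθ2 : θ < 3) :
    ∫ y in Ioi 0, sin (2 * π * y) * y ^ (-(θ - 1))
      = (θ - 1) / π * ∫ y in Ioi 0, sin (π * y) ^ 2 * y ^ (-θ) := by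
  have hv : ∀ y ∈ Ioi (0 : ℝ), HasDerivAt (fun y => y ^ (-(θ - 1))) (-(θ - 1) * y ^ (-θ)) y :=
    fun y hy => by
      convert hasDerivAt_rpow_const (p := -(θ - 1)) (Or.inl (ne_of_gt hy)) using 3
      ring
  have huv' : IntegrableOn ((fun y => sin (π * y) ^ 2) * fun y => -(θ - 1) * y ^ (-θ)) (Ioi 0) := by
    refine IntegrableOn.congr_fun
      ((integrableOn_sin_pi_mul_sq_mul_rpow_neg (by linarith) hθ2).const_mul (-(θ - 1)))
      (fun y _ => ?_) measurableSet_Ioi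
    simp only [Pi.mul_apply]
    ring
  have hu'v : IntegrableOn ((fun y => π * sin (2 * π * y)) * fun y => y ^ (-(θ - 1))) (Ioi 0) := by
    refine IntegrableOn.congr_fun ((integrableOn_sin_two_pi_mul_mul_rpow_neg hθ1 hθ2).const_mul π)
      (fun y _ => ?_) measurableSet_Ioi
    simp only [Pi.mul_apply]
    ring
  have h_zero : Tendsto ((fun y => sin (π * y) ^ 2) * fun y => y ^ (-(θ - 1))) (𝓝[>] 0) (𝓝 0) := by
    refine squeeze_zero_norm' ?_ (tendsto_const_mul_rpow_nhdsGT_zero (s := 2 - (θ - 1))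
      (by linarith) (2 * π ^ 2))
    filter_upwards [self_mem_nhdsWithin] with y hy
    exact abs_mul_rpow_neg_le (h := fun y => sin (π * y) ^ 2) hy (abs_sin_pi_mul_sq_le y)
  have h_infty : Tendsto ((fun y => sin (π * y) ^ 2) * fun y => y ^ (-(θ - 1))) atTop (𝓝 0) := by
    refine squeeze_zero_norm' ?_ (tendsto_rpow_neg_atTop (by linarith : 0 < θ - 1))
    filter_upwards [eventually_gt_atTop 0] with y hy
    rw [Pi.mul_apply, norm_mul, Real.norm_of_nonneg (rpow_pos_of_pos hy _).le]
    exact mul_le_of_le_one_left (rpow_pos_of_pos hy _).le (by simpa using sin_sq_le_one (π * y))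
  have hibp := integral_Ioi_mul_deriv_eq_deriv_mul (fun y _ => hasDerivAt_sin_pi_mul_sq y) hv
    huv' hu'v h_zero h_infty
  simp only [mul_left_comm _ (-(θ - 1)), mul_assoc π, integral_const_mul] at hibp
  field_simp
  linarith

lemma tendsto_rpow_mul_ahat {θ : ℝ} (hθ1 : 2 < θ) (hθ2 : θ < 3) :
    Tendsto (fun k => k ^ (1 - θ) * ahat θ k) (𝓝[>] 0) (𝓝 (Cθ θ)) := by
  rw [Cθ_eq]
  refine ((tendsto_mul_tsum_mul_rpow_neg (fun y => (hasDerivAt_sin_pi_mul_sq y).differentiableAt)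
    (by linarith) (by constructor <;> linarith : (2 : ℝ) - θ ∈ Ioo (-1) 0)
    (fun y _ => abs_sin_pi_mul_sq_le y) (fun _ hy => abs_deriv_sin_pi_mul_sq_le hy)
    abs_sin_pi_mul_sq_le_const).const_mul 4).congr' ?_
  filter_upwards [self_mem_nhdsWithin] with k hk
  rw [mul_tsum_mul_rpow_neg_eq (f := fun y => sin (π * y) ^ 2) hk]
  simp only [ahat, mul_assoc]
  ring

lemma tendsto_rpow_mul_ahatD {θ : ℝ} (hθ1 : 2 < θ) (hθ2 : θ < 3) :
    Tendsto (fun k => k ^ (2 - θ) * ahatD θ k) (𝓝[>] 0) (𝓝 ((θ - 1) * Cθ θ)) := by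
  have hlim := (tendsto_mul_tsum_mul_rpow_neg (j := 1)
    (fun y => (((hasDerivAt_id' y).const_mul (2 * π)).sin).differentiableAt)
    (by linarith) (by constructor <;> linarith : (1 : ℝ) - (θ - 1) ∈ Ioo (-1) 0)
    (fun _ hy => abs_sin_two_pi_mul_le hy) (fun y _ => abs_deriv_sin_two_pi_mul_le y)
    abs_sin_two_pi_mul_le_const).const_mul (4 * π)
  rw [integral_sin_two_pi_mul_mul_rpow_neg hθ1 hθ2] at hlim
  convert hlim.congr' ?_ using 2
  · rw [Cθ_eq]
    field_simp
  · filter_upwards [self_mem_nhdsWithin] with k hk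
    rw [mul_tsum_mul_rpow_neg_eq (f := fun y => sin (2 * π * y)) hk,
      show 1 - (θ - 1) = 2 - θ by ring]
    simp only [ahatD, mul_assoc]
    ring

lemma rpow_mul_div_two_sqrt {k : ℝ} (hk : 0 < k) (θ A B : ℝ) :
    k ^ ((3 - θ) / 2) * (A / (2 * √B)) = k ^ (2 - θ) * A / (2 * √(k ^ (1 - θ) * B)) := by
  have hsqrt : √(k ^ (1 - θ) * B) = k ^ ((1 - θ) / 2) * √B := by
    rw [sqrt_mul (rpow_pos_of_pos hk _).le, sqrt_eq_rpow, ← rpow_mul hk.le]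
    ring_nf
  have hpow : k ^ (2 - θ) = k ^ ((3 - θ) / 2) * k ^ ((1 - θ) / 2) := by
    rw [← rpow_add hk]; ring_nf
  have hpos := rpow_pos_of_pos hk ((1 - θ) / 2)
  rw [hsqrt, hpow]
  rcases eq_or_ne √B 0 with hB | hB
  · simp [hB]
  · field_simp

theorem stmt9 (θ : ℝ) (hθ1 : 2 < θ) (hθ2 : θ < 3) :
    (∀ k ∈ Set.Ioo (0 : ℝ) (1 / 2),
      HasDerivAt (disp θ) (ahatD θ k / (2 * Real.sqrt (ahat θ k))) k) ∧
    Filter.Tendsto (fun k : ℝ => k ^ ((3 - θ) / 2) * deriv (disp θ) k)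
      (nhdsWithin 0 (Set.Ioi 0)) (nhds ((θ - 1) * Real.sqrt (Cθ θ) / 2)) := by
  have hderiv : ∀ k ∈ Ioo (0 : ℝ) (1 / 2),
      HasDerivAt (disp θ) (ahatD θ k / (2 * √(ahat θ k))) k := fun k hk =>
    (hasDerivAt_ahat hθ1 k).sqrt (ahat_pos (by linarith) ⟨hk.1, by linarith [hk.2]⟩).ne'
  refine ⟨hderiv, ?_⟩
  have hC := Cθ_pos (by linarith) hθ2
  have hlim := (tendsto_rpow_mul_ahatD hθ1 hθ2).div
    ((tendsto_rpow_mul_ahat hθ1 hθ2).sqrt.const_mul 2) (by positivity)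
  have hval : (θ - 1) * Cθ θ / (2 * √(Cθ θ)) = (θ - 1) * √(Cθ θ) / 2 := by
    nth_rw 1 [← mul_self_sqrt hC.le]
    field_simp
  rw [← hval]
  refine hlim.congr' ?_
  filter_upwards [Ioo_mem_nhdsGT (by norm_num : (0 : ℝ) < 1 / 2)] with k hk
  rw [(hderiv k hk).deriv, rpow_mul_div_two_sqrt hk.1, Pi.div_apply]
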